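/- (Reduction to the modularization) Assume every singleton {i}, i ∈ [n], is independent. For each profit value q occurring among the p_i, let P_I^q be an inclusionwise maximal independent subset of minimum total weight of the profit class P^q = {i ∈ [n] : p_i = q}, and let I* = ∪_q P_I^q. Then: (a) for every feasible chain 𝒮 = (S_1, …, S_T) there exists a feasible chain 𝒮' = (S'_1, …, S'_T) with S'_T ⊆ I* and ∑_{t=1}^T Δ_t · ∑_{i ∈ S'_t} p_i ≥ ∑_{t=1}^T Δ_t · γ(S_t); and (b) every feasible chain 𝒮̂ with Ŝ_T ⊆ I* satisfies ∑_{t=1}^T Δ_t · γ(Ŝ_t) = ∑_{t=1}^T Δ_t · ∑_{i ∈ Ŝ_t} p_i. -/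

import Mathlib

/-!
Inside one profit class all elements have the same profit, so there `γ` is a multiple of a matroid
rank: independent sets of a class can be augmented from any larger one, and all maximal
independent subsets of a class have the same size. A minimal dependent set has constant profit,
since deleting any of its elements lowers `γ` by nothing while lowering the modular profit by that
element's profit; hence a set whose profit classes are independent is independent, which gives (b).
For (a), choose nested independent sets `A t ⊆ S t` spanning `S t`, so that `γ (S t)` is the
modular profit of `A t`, and replace, class by class, the elements of `A t` by equally many
lightest elements of `P_I^q`. This keeps the profit and the nesting, and an exchange argument
against the minimum-weight basis `P_I^q` shows that the replacement is no heavier than `A t`.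
-/

open Finset

def AoNIndep {n : ℕ} (γ : Finset (Fin n) → ℕ) (p : Fin n → ℕ) (S : Finset (Fin n)) : Prop :=
  γ S = ∑ i ∈ S, p i

def AllOrNothing {n : ℕ} (γ : Finset (Fin n) → ℕ) (p : Fin n → ℕ) : Prop :=
  ∀ (i : Fin n) (S : Finset (Fin n)), γ (insert i S) = γ S ∨ γ (insert i S) = γ S + p i

def IsSubmodular {n : ℕ} (γ : Finset (Fin n) → ℕ) : Prop :=
  ∀ S T : Finset (Fin n), S ⊆ T → ∀ i : Fin n, γ (insert i S) + γ T ≥ γ (insert i T) + γ S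

def Spans {n : ℕ} (γ : Finset (Fin n) → ℕ) (B D : Finset (Fin n)) : Prop :=
  ∀ i ∈ D, γ (insert i B) = γ B

structure IsMinWeightBasis {n : ℕ} (γ : Finset (Fin n) → ℕ) (p w : Fin n → ℕ)
    (Q P : Finset (Fin n)) : Prop where
  subset : P ⊆ Q
  indep : AoNIndep γ p P
  eq_of_subset : ∀ B ⊆ Q, AoNIndep γ p B → P ⊆ B → P = B
  sum_le : ∀ B ⊆ Q, AoNIndep γ p B → (∀ C ⊆ Q, AoNIndep γ p C → B ⊆ C → B = C) →
    ∑ i ∈ P, w i ≤ ∑ i ∈ B, w i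

theorem exists_monotone_lightest_subsets {α β : Type*} [DecidableEq α] [AddCommMonoid β]
    [LinearOrder β] [IsOrderedAddMonoid β] (w : α → β) (P : Finset α) :
    ∃ F : ℕ → Finset α, Monotone F ∧ ∀ k, F k ⊆ P ∧ #(F k) = min k #P ∧
      ∀ C ⊆ P, #C = k → ∑ i ∈ F k, w i ≤ ∑ i ∈ C, w i := by
  induction P using Finset.induction_on_min_value w with
  | empty =>
    refine ⟨fun _ => ∅, monotone_const, fun k => ⟨subset_rfl, by simp, fun C hC _ => ?_⟩⟩
    simp [subset_empty.1 hC]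
  | insert a P ha hmin ih =>
    obtain ⟨F, hFmono, hF⟩ := ih
    refine ⟨fun k => Nat.casesOn k ∅ fun k => insert a (F k), monotone_nat_of_le_succ ?_, ?_⟩
    · rintro (_ | k)
      · exact empty_subset _
      · exact insert_subset_insert a (hFmono k.le_succ)
    rintro (_ | k)
    · refine ⟨empty_subset _, by simp, fun C _ hC => ?_⟩
      simp [card_eq_zero.1 hC]
    obtain ⟨hFP, hFcard, hFmin⟩ := hF k
    have haF : a ∉ F k := fun h => ha (hFP h)
    refine ⟨insert_subset_insert a hFP, ?_, fun C hC hCk => ?_⟩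
    · simp only [card_insert_of_notMem haF, card_insert_of_notMem ha, hFcard]
      omega
    -- `C` loses an element `c` at least as heavy as `a`, the lightest element of `insert a P`.
    obtain ⟨c, hcC, hac, hCc⟩ : ∃ c ∈ C, w a ≤ w c ∧ C.erase c ⊆ P := by
      by_cases haC : a ∈ C
      · exact ⟨a, haC, le_rfl, fun x hx =>
          (mem_insert.1 (hC (mem_of_mem_erase hx))).resolve_left (ne_of_mem_erase hx)⟩
      · have hCP : C ⊆ P := fun x hx =>
          (mem_insert.1 (hC hx)).resolve_left fun h => haC (h ▸ hx)
        obtain ⟨c, hc⟩ := card_pos.1 (by omega : 0 < #C)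
        exact ⟨c, hc, hmin c (hCP hc), (erase_subset c C).trans hCP⟩
    have hFC := hFmin (C.erase c) hCc (by rw [card_erase_of_mem hcC, hCk]; rfl)
    calc ∑ i ∈ insert a (F k), w i = w a + ∑ i ∈ F k, w i := sum_insert haF
      _ ≤ w c + ∑ i ∈ C.erase c, w i := add_le_add hac hFC
      _ = ∑ i ∈ C, w i := add_sum_erase C w hcC

section

variable {n : ℕ} {γ : Finset (Fin n) → ℕ} {p : Fin n → ℕ}

theorem AoNIndep.empty (hγ0 : γ ∅ = 0) : AoNIndep γ p ∅ := by
  simp [AoNIndep, hγ0]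

theorem AllOrNothing.le_add_sum (haon : AllOrNothing γ p) (S D : Finset (Fin n)) :
    γ (S ∪ D) ≤ γ S + ∑ i ∈ D, p i := by
  induction D using Finset.induction with
  | empty => simp
  | @insert i D hi ih =>
    rw [union_insert, sum_insert hi]
    rcases haon i (S ∪ D) with h | h <;> omega

theorem AllOrNothing.le_sum (haon : AllOrNothing γ p) (hγ0 : γ ∅ = 0) (S : Finset (Fin n)) :
    γ S ≤ ∑ i ∈ S, p i := by
  simpa [hγ0] using haon.le_add_sum ∅ S

theorem AoNIndep.subset (hγ0 : γ ∅ = 0) (haon : AllOrNothing γ p) {B S : Finset (Fin n)}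
    (hB : AoNIndep γ p B) (hSB : S ⊆ B) : AoNIndep γ p S := by
  have hle := haon.le_add_sum S (B \ S)
  rw [union_sdiff_of_subset hSB] at hle
  have hsum := sum_sdiff hSB (f := p)
  have hS := haon.le_sum hγ0 S
  unfold AoNIndep at hB ⊢
  omega

theorem AllOrNothing.eq_or_indep_insert (haon : AllOrNothing γ p) {B : Finset (Fin n)}
    (hB : AoNIndep γ p B) (i : Fin n) :
    γ (insert i B) = γ B ∨ i ∉ B ∧ AoNIndep γ p (insert i B) := by
  by_cases hi : i ∈ B
  · exact Or.inl (by rw [insert_eq_of_mem hi])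
  · refine (haon i B).imp_right fun h => ⟨hi, ?_⟩
    rw [AoNIndep, h, sum_insert hi, hB, add_comm]

theorem Spans.mono (hmono : Monotone γ) (hsub : IsSubmodular γ) {S T D : Finset (Fin n)}
    (h : Spans γ S D) (hST : S ⊆ T) : Spans γ T D := fun i hi => by
  have := hsub S T hST i
  have := h i hi
  have := hmono (subset_insert i T)
  omega

theorem Spans.union_eq (hmono : Monotone γ) (hsub : IsSubmodular γ) {S D : Finset (Fin n)}
    (h : Spans γ S D) : γ (S ∪ D) = γ S := by
  induction D using Finset.induction with
  | empty => simp
  | @insert i D hi ih =>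
    have hD : γ (S ∪ D) = γ S := ih fun j hj => h j (mem_insert_of_mem hj)
    rw [union_insert, (h.mono hmono hsub subset_union_left) i (mem_insert_self i D), hD]

theorem Spans.sum_le (hmono : Monotone γ) (hsub : IsSubmodular γ) {B D : Finset (Fin n)}
    (hB : AoNIndep γ p B) (h : Spans γ D B) : ∑ i ∈ B, p i ≤ γ D := by
  rw [← hB, ← h.union_eq hmono hsub]
  exact hmono subset_union_right

theorem AllOrNothing.exists_indep_spans (haon : AllOrNothing γ p) {B S : Finset (Fin n)}
    (hB : AoNIndep γ p B) (hBS : B ⊆ S) :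
    ∃ C, B ⊆ C ∧ C ⊆ S ∧ AoNIndep γ p C ∧ Spans γ C S := by
  classical
  obtain ⟨C, hC, hCmax⟩ := exists_max_image {C ∈ S.powerset | B ⊆ C ∧ AoNIndep γ p C} card
    ⟨B, by simp [hBS, hB]⟩
  simp only [mem_filter, mem_powerset] at hC hCmax
  obtain ⟨hCS, hBC, hCind⟩ := hC
  refine ⟨C, hBC, hCS, hCind, fun i hi => ?_⟩
  refine (haon.eq_or_indep_insert hCind i).resolve_right fun ⟨hiC, hind⟩ => ?_
  have := hCmax _ ⟨insert_subset hi hCS, hBC.trans (subset_insert i C), hind⟩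
  rw [card_insert_of_notMem hiC] at this
  omega

theorem AllOrNothing.exists_monotone_indep_spans (hγ0 : γ ∅ = 0) (haon : AllOrNothing γ p)
    {S : ℕ → Finset (Fin n)} (hS : Monotone S) :
    ∃ A : ℕ → Finset (Fin n), Monotone A ∧
      ∀ t, A t ⊆ S t ∧ AoNIndep γ p (A t) ∧ Spans γ (A t) (S t) := by
  choose! ext hext using fun (B S : Finset (Fin n)) (hB : AoNIndep γ p B) (hBS : B ⊆ S) =>
    haon.exists_indep_spans hB hBS
  let A : ℕ → Finset (Fin n) := fun t => Nat.rec (ext ∅ (S 0)) (fun t At => ext At (S (t + 1))) t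
  have hA : ∀ t, A t ⊆ S t ∧ AoNIndep γ p (A t) ∧ Spans γ (A t) (S t) := by
    intro t
    induction t with
    | zero => exact (hext ∅ (S 0) (AoNIndep.empty hγ0) (empty_subset _)).2
    | succ t ih => exact (hext (A t) (S (t + 1)) ih.2.1 (ih.1.trans (hS t.le_succ))).2
  exact ⟨A, monotone_nat_of_le_succ fun t =>
    (hext (A t) (S (t + 1)) (hA t).2.1 ((hA t).1.trans (hS t.le_succ))).1, hA⟩

theorem AllOrNothing.exists_monotone_indep_spans_fin (hγ0 : γ ∅ = 0) (haon : AllOrNothing γ p)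
    {T : ℕ} {S : Fin T → Finset (Fin n)} (hS : Monotone S) :
    ∃ A : Fin T → Finset (Fin n), Monotone A ∧
      ∀ t, A t ⊆ S t ∧ AoNIndep γ p (A t) ∧ Spans γ (A t) (S t) := by
  let S' : ℕ → Finset (Fin n) := fun u => if h : u < T then S ⟨u, h⟩ else univ
  have hS' : Monotone S' := by
    intro u v huv
    simp only [S']
    split_ifs with hu hv hv
    · exact hS huv
    · exact subset_univ _
    · omega
    · exact subset_rfl
  obtain ⟨A, hA, hAS⟩ := haon.exists_monotone_indep_spans hγ0 hS'
  refine ⟨fun t => A t, fun t u htu => hA htu, fun t => ?_⟩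
  simpa [S'] using hAS t

theorem AllOrNothing.eq_erase_of_not_indep (haon : AllOrNothing γ p) {C : Finset (Fin n)}
    {x : Fin n} (hC : ¬AoNIndep γ p C) (hx : x ∈ C) (hCx : AoNIndep γ p (C.erase x)) :
    γ C = γ (C.erase x) := by
  have h := haon.eq_or_indep_insert hCx x
  rw [insert_erase hx] at h
  exact h.resolve_right fun h => hC h.2

theorem AllOrNothing.profit_eq_of_minimal_dependent (haon : AllOrNothing γ p)
    {C : Finset (Fin n)} (hC : ¬AoNIndep γ p C) (hmin : ∀ y ∈ C, AoNIndep γ p (C.erase y))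
    {x y : Fin n} (hx : x ∈ C) (hy : y ∈ C) : p x = p y := by
  have hγx := haon.eq_erase_of_not_indep hC hx (hmin x hx)
  have hγy := haon.eq_erase_of_not_indep hC hy (hmin y hy)
  have hindx : γ (C.erase x) = _ := hmin x hx
  have hindy : γ (C.erase y) = _ := hmin y hy
  have := sum_erase_add C p hx
  have := sum_erase_add C p hy
  omega

theorem AllOrNothing.indep_of_forall_indep_filter (hγ0 : γ ∅ = 0) (haon : AllOrNothing γ p)
    {S : Finset (Fin n)} (h : ∀ x ∈ S, AoNIndep γ p (S.filter (p · = p x))) :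
    AoNIndep γ p S := by
  suffices ∀ C ⊆ S, AoNIndep γ p C from this S subset_rfl
  intro C
  induction C using Finset.strongInduction with
  | H C ih =>
    intro hCS
    by_contra hC
    obtain ⟨x, hx⟩ : C.Nonempty :=
      nonempty_iff_ne_empty.2 fun h => hC (h ▸ AoNIndep.empty hγ0)
    have hmin : ∀ y ∈ C, AoNIndep γ p (C.erase y) := fun y hy =>
      ih _ (erase_ssubset hy) ((erase_subset y C).trans hCS)
    exact hC ((h x (hCS hx)).subset hγ0 haon fun y hy =>
      mem_filter.2 ⟨hCS hy, haon.profit_eq_of_minimal_dependent hC hmin hy hx⟩)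

theorem AllOrNothing.indep_of_subset_biUnion (hγ0 : γ ∅ = 0) (haon : AllOrNothing γ p)
    {s : Finset ℕ} {PI : ℕ → Finset (Fin n)} (hPIp : ∀ q ∈ s, ∀ i ∈ PI q, p i = q)
    (hPI : ∀ q ∈ s, AoNIndep γ p (PI q)) {S : Finset (Fin n)} (hS : S ⊆ s.biUnion PI) :
    AoNIndep γ p S := by
  refine haon.indep_of_forall_indep_filter hγ0 fun x hx => ?_
  obtain ⟨q, hq, hxq⟩ := mem_biUnion.1 (hS hx)
  refine (hPI q hq).subset hγ0 haon fun y hy => ?_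
  obtain ⟨hyS, hyx⟩ := mem_filter.1 hy
  obtain ⟨q', hq', hyq'⟩ := mem_biUnion.1 (hS hyS)
  rwa [show q = q' by rw [← hPIp q hq x hxq, ← hyx, hPIp q' hq' y hyq']]

theorem Spans.card_le (hmono : Monotone γ) (hsub : IsSubmodular γ) {q : ℕ} (hq : 0 < q)
    {B D : Finset (Fin n)} (hB : AoNIndep γ p B) (hD : AoNIndep γ p D)
    (hBq : ∀ i ∈ B, p i = q) (hDq : ∀ i ∈ D, p i = q) (h : Spans γ D B) : #B ≤ #D := by
  have := h.sum_le hmono hsub hB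
  rw [hD, sum_const_nat hBq, sum_const_nat hDq] at this
  exact Nat.le_of_mul_le_mul_right this hq

theorem AllOrNothing.exists_insert_indep (haon : AllOrNothing γ p) (hmono : Monotone γ)
    (hsub : IsSubmodular γ) {q : ℕ} (hq : 0 < q) {B D : Finset (Fin n)}
    (hB : AoNIndep γ p B) (hD : AoNIndep γ p D) (hBq : ∀ i ∈ B, p i = q)
    (hDq : ∀ i ∈ D, p i = q) (hlt : #B < #D) : ∃ y ∈ D, y ∉ B ∧ AoNIndep γ p (insert y B) := by
  by_contra! h
  have hspan : Spans γ B D := fun y hy =>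
    (haon.eq_or_indep_insert hB y).resolve_right fun h' => h y hy h'.1 h'.2
  exact hlt.not_ge (hspan.card_le hmono hsub hq hD hB hDq hBq)

theorem AllOrNothing.exists_indep_superset_card_eq (haon : AllOrNothing γ p)
    (hmono : Monotone γ) (hsub : IsSubmodular γ) {q : ℕ} (hq : 0 < q) {B D : Finset (Fin n)}
    (hB : AoNIndep γ p B) (hD : AoNIndep γ p D) (hBq : ∀ i ∈ B, p i = q)
    (hDq : ∀ i ∈ D, p i = q) (hle : #B ≤ #D) :
    ∃ C, B ⊆ C ∧ C ⊆ B ∪ D ∧ AoNIndep γ p C ∧ #C = #D := by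
  induction h : #D - #B generalizing B with
  | zero => exact ⟨B, subset_rfl, subset_union_left, hB, by omega⟩
  | succ k ih =>
    obtain ⟨y, hyD, hyB, hyB'⟩ := haon.exists_insert_indep hmono hsub hq hB hD hBq hDq (by omega)
    have hcard := card_insert_of_notMem hyB
    obtain ⟨C, hBC, hCBD, hC, hCD⟩ :=
      ih hyB' ((forall_mem_insert _ _ _).2 ⟨hDq y hyD, hBq⟩) (by omega) (by omega)
    refine ⟨C, (subset_insert y B).trans hBC, hCBD.trans ?_, hC, hCD⟩
    exact union_subset (insert_subset (mem_union_right _ hyD) subset_union_left) subset_union_right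

variable {w : Fin n → ℕ} {Q P : Finset (Fin n)}

theorem IsMinWeightBasis.spans (hP : IsMinWeightBasis γ p w Q P) (haon : AllOrNothing γ p) :
    Spans γ P Q := fun i hi =>
  (haon.eq_or_indep_insert hP.indep i).resolve_right fun ⟨hiP, hind⟩ =>
    hiP (hP.eq_of_subset _ (insert_subset hi hP.subset) hind (subset_insert i P) ▸
      mem_insert_self i P)

theorem IsMinWeightBasis.card_le (hP : IsMinWeightBasis γ p w Q P) (haon : AllOrNothing γ p)
    (hmono : Monotone γ) (hsub : IsSubmodular γ) {q : ℕ} (hq : 0 < q) (hQ : ∀ i ∈ Q, p i = q)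
    {B : Finset (Fin n)} (hBQ : B ⊆ Q) (hB : AoNIndep γ p B) : #B ≤ #P :=
  Spans.card_le hmono hsub hq hB hP.indep (fun i hi => hQ i (hBQ hi))
    (fun i hi => hQ i (hP.subset hi)) fun i hi => hP.spans haon i (hBQ hi)

theorem IsMinWeightBasis.exists_subset_card_eq_sum_le (hP : IsMinWeightBasis γ p w Q P)
    (haon : AllOrNothing γ p) (hmono : Monotone γ) (hsub : IsSubmodular γ) {q : ℕ} (hq : 0 < q)
    (hQ : ∀ i ∈ Q, p i = q) {B : Finset (Fin n)} (hBQ : B ⊆ Q) (hB : AoNIndep γ p B) :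
    ∃ E ⊆ P, #E = #B ∧ ∑ i ∈ E, w i ≤ ∑ i ∈ B, w i := by
  obtain ⟨C, hBC, hCBP, hC, hCP⟩ := haon.exists_indep_superset_card_eq hmono hsub hq hB hP.indep
    (fun i hi => hQ i (hBQ hi)) (fun i hi => hQ i (hP.subset hi))
    (hP.card_le haon hmono hsub hq hQ hBQ hB)
  have hCQ : C ⊆ Q := hCBP.trans (union_subset hBQ hP.subset)
  have hPC : ∑ i ∈ P, w i ≤ ∑ i ∈ C, w i := hP.sum_le C hCQ hC fun D hDQ hD hCD =>
    eq_of_subset_of_card_le hCD (hCP ▸ hP.card_le haon hmono hsub hq hQ hDQ hD)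
  have hCBP' : C \ B ⊆ P := fun x hx =>
    (mem_union.1 (hCBP (mem_sdiff.1 hx).1)).resolve_left (mem_sdiff.1 hx).2
  -- Trade the elements that `C` added to `B` for the same elements of `P`.
  refine ⟨P \ (C \ B), sdiff_subset, ?_, ?_⟩
  · have := card_le_card hBC
    rw [card_sdiff_of_subset hCBP', card_sdiff_of_subset hBC, ← hCP]
    omega
  · have := sum_sdiff hCBP' (f := w)
    have := sum_sdiff hBC (f := w)
    omega

theorem IsMinWeightBasis.card_lightest_eq_sum_le (hP : IsMinWeightBasis γ p w Q P)
    (haon : AllOrNothing γ p) (hmono : Monotone γ) (hsub : IsSubmodular γ) {q : ℕ} (hq : 0 < q)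
    (hQ : ∀ i ∈ Q, p i = q) {F : ℕ → Finset (Fin n)}
    (hF : ∀ k, #(F k) = min k #P ∧ ∀ C ⊆ P, #C = k → ∑ i ∈ F k, w i ≤ ∑ i ∈ C, w i)
    {B : Finset (Fin n)} (hBQ : B ⊆ Q) (hB : AoNIndep γ p B) :
    #(F #B) = #B ∧ ∑ i ∈ F #B, w i ≤ ∑ i ∈ B, w i := by
  obtain ⟨E, hEP, hEB, hEw⟩ := hP.exists_subset_card_eq_sum_le haon hmono hsub hq hQ hBQ hB
  exact ⟨(hF #B).1.trans (min_eq_left (hP.card_le haon hmono hsub hq hQ hBQ hB)),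
    ((hF #B).2 E hEP hEB).trans hEw⟩

theorem exists_modular_replacement (hp : ∀ i, 1 ≤ p i) (hγ0 : γ ∅ = 0) (haon : AllOrNothing γ p)
    (hmono : Monotone γ) (hsub : IsSubmodular γ) {PI : ℕ → Finset (Fin n)}
    (hPI : ∀ q ∈ univ.image p, IsMinWeightBasis γ p w (univ.filter (p · = q)) (PI q)) :
    ∃ M : Finset (Fin n) → Finset (Fin n), Monotone M ∧ ∀ A, M A ⊆ (univ.image p).biUnion PI ∧
      (AoNIndep γ p A → ∑ i ∈ M A, p i = ∑ i ∈ A, p i ∧ ∑ i ∈ M A, w i ≤ ∑ i ∈ A, w i) := by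
  choose! F hFmono hF using fun q => exists_monotone_lightest_subsets w (PI q)
  have hFp : ∀ q ∈ univ.image p, ∀ k, ∀ i ∈ F q k, p i = q := fun q hq k i hi =>
    (mem_filter.1 ((hPI q hq).subset ((hF q k).1 hi))).2
  refine ⟨fun A => (univ.image p).biUnion fun q => F q #(A.filter (p · = q)),
    fun A A' h => biUnion_mono fun q _ => hFmono q (card_le_card (filter_subset_filter _ h)),
    fun A => ⟨biUnion_mono fun q _ => (hF q _).1, fun hA => ?_⟩⟩
  have hM : ∀ f : Fin n → ℕ, ∑ i ∈ (univ.image p).biUnion (fun q => F q #(A.filter (p · = q))), f i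
      = ∑ q ∈ univ.image p, ∑ i ∈ F q #(A.filter (p · = q)), f i := fun f =>
    sum_biUnion fun q hq q' hq' hne => disjoint_left.2 fun i hi hi' =>
      hne ((hFp q hq _ i hi).symm.trans (hFp q' hq' _ i hi'))
  have hA' : ∀ f : Fin n → ℕ, ∑ i ∈ A, f i = ∑ q ∈ univ.image p, ∑ i ∈ A.filter (p · = q), f i :=
    fun f => (sum_fiberwise_of_maps_to (fun i _ => mem_image_of_mem p (mem_univ i)) f).symm
  have hclass : ∀ q ∈ univ.image p, #(F q #(A.filter (p · = q))) = #(A.filter (p · = q)) ∧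
      ∑ i ∈ F q #(A.filter (p · = q)), w i ≤ ∑ i ∈ A.filter (p · = q), w i := by
    intro q hq
    obtain ⟨j, -, rfl⟩ := mem_image.1 hq
    exact (hPI _ hq).card_lightest_eq_sum_le haon hmono hsub (hp j) (fun i hi => (mem_filter.1 hi).2)
      (fun k => (hF _ k).2) (filter_subset_filter _ (subset_univ A))
      (hA.subset hγ0 haon (filter_subset _ A))
  rw [hM, hM, hA' p, hA' w]
  refine ⟨sum_congr rfl fun q hq => ?_, sum_le_sum fun q hq => (hclass q hq).2⟩
  rw [sum_const_nat (hFp q hq _), sum_const_nat fun i hi => (mem_filter.1 hi).2, (hclass q hq).1]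

end

theorem reduction_to_modularization_general {n T : ℕ} (γ : Finset (Fin n) → ℕ)
    (p w : Fin n → ℕ) (W Δ : Fin T → ℕ)
    (hp : ∀ i, 1 ≤ p i)
    (hγ0 : γ ∅ = 0)
    (hmono : ∀ S T : Finset (Fin n), S ⊆ T → γ S ≤ γ T)
    (hsub : ∀ S T : Finset (Fin n), S ⊆ T → ∀ i : Fin n,
      γ (insert i S) + γ T ≥ γ (insert i T) + γ S)
    (haon : ∀ (i : Fin n) (S : Finset (Fin n)),
      γ (insert i S) = γ S ∨ γ (insert i S) = γ S + p i)
    -- for each profit value `q` occurring among the `p i`, `PI q` is an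
    -- inclusionwise maximal independent subset of minimum total weight of the
    -- profit class `{i : p i = q}`
    (PI : ℕ → Finset (Fin n))
    (hPIsub : ∀ q ∈ Finset.univ.image p, PI q ⊆ Finset.univ.filter (fun i => p i = q))
    (hPIindep : ∀ q ∈ Finset.univ.image p, AoNIndep γ p (PI q))
    (hPImax : ∀ q ∈ Finset.univ.image p, ∀ B : Finset (Fin n),
      B ⊆ Finset.univ.filter (fun i => p i = q) → AoNIndep γ p B → PI q ⊆ B → PI q = B)
    (hPImin : ∀ q ∈ Finset.univ.image p, ∀ B : Finset (Fin n),
      B ⊆ Finset.univ.filter (fun i => p i = q) → AoNIndep γ p B →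
      (∀ C : Finset (Fin n), C ⊆ Finset.univ.filter (fun i => p i = q) →
        AoNIndep γ p C → B ⊆ C → B = C) →
      ∑ i ∈ PI q, w i ≤ ∑ i ∈ B, w i)
    (Istar : Finset (Fin n)) (hIstar : Istar = (Finset.univ.image p).biUnion PI) :
    -- (a) every feasible chain is dominated by a feasible chain inside I*
    (∀ S : Fin T → Finset (Fin n), Monotone S → (∀ t, ∑ i ∈ S t, w i ≤ W t) →
      ∃ S' : Fin T → Finset (Fin n),
        Monotone S' ∧ (∀ t, ∑ i ∈ S' t, w i ≤ W t) ∧ (∀ t, S' t ⊆ Istar) ∧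
        ∑ t, Δ t * γ (S t) ≤ ∑ t, Δ t * ∑ i ∈ S' t, p i) ∧
    -- (b) inside I*, the submodular profit coincides with the modular profit
    (∀ S : Fin T → Finset (Fin n), Monotone S → (∀ t, ∑ i ∈ S t, w i ≤ W t) →
      (∀ t, S t ⊆ Istar) →
      ∑ t, Δ t * γ (S t) = ∑ t, Δ t * ∑ i ∈ S t, p i) := by
  have hPI : ∀ q ∈ univ.image p, IsMinWeightBasis γ p w (univ.filter (p · = q)) (PI q) :=
    fun q hq => ⟨hPIsub q hq, hPIindep q hq, hPImax q hq, hPImin q hq⟩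
  subst hIstar
  refine ⟨fun S hS hSW => ?_, fun S _ _ hSI => sum_congr rfl fun t _ => ?_⟩
  · obtain ⟨M, hM, hMA⟩ := exists_modular_replacement hp hγ0 haon hmono hsub hPI
    obtain ⟨A, hA, hAS⟩ := AllOrNothing.exists_monotone_indep_spans_fin hγ0 haon hS
    have hMAt : ∀ t, ∑ i ∈ M (A t), p i = ∑ i ∈ A t, p i ∧ ∑ i ∈ M (A t), w i ≤ ∑ i ∈ A t, w i :=
      fun t => (hMA (A t)).2 (hAS t).2.1
    refine ⟨M ∘ A, hM.comp hA, fun t => ?_, fun t => (hMA (A t)).1, sum_le_sum fun t _ => ?_⟩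
    · calc ∑ i ∈ M (A t), w i ≤ ∑ i ∈ A t, w i := (hMAt t).2
        _ ≤ ∑ i ∈ S t, w i := sum_le_sum_of_subset (hAS t).1
        _ ≤ W t := hSW t
    · have hγS : γ (S t) = γ (A t) := by
        rw [← (hAS t).2.2.union_eq hmono hsub, union_eq_right.2 (hAS t).1]
      rw [hγS, (hAS t).2.1, Function.comp_apply, (hMAt t).1]
  · have hPIp : ∀ q ∈ univ.image p, ∀ i ∈ PI q, p i = q := fun q hq i hi =>
      (mem_filter.1 (hPIsub q hq hi)).2
    rw [AllOrNothing.indep_of_subset_biUnion hγ0 haon hPIp hPIindep (hSI t)]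

theorem reduction_to_modularization {n T : ℕ} (γ : Finset (Fin n) → ℕ)
    (p w : Fin n → ℕ) (W Δ : Fin T → ℕ)
    (hW : Monotone W)
    (hp : ∀ i, 1 ≤ p i)
    (hγ0 : γ ∅ = 0)
    (hmono : ∀ S T : Finset (Fin n), S ⊆ T → γ S ≤ γ T)
    (hsub : ∀ S T : Finset (Fin n), S ⊆ T → ∀ i : Fin n,
      γ (insert i S) + γ T ≥ γ (insert i T) + γ S)
    (haon : ∀ (i : Fin n) (S : Finset (Fin n)),
      γ (insert i S) = γ S ∨ γ (insert i S) = γ S + p i)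
    (hsingle : ∀ i : Fin n, AoNIndep γ p {i})
    -- for each profit value `q` occurring among the `p i`, `PI q` is an
    -- inclusionwise maximal independent subset of minimum total weight of the
    -- profit class `{i : p i = q}`
    (PI : ℕ → Finset (Fin n))
    (hPIsub : ∀ q ∈ Finset.univ.image p, PI q ⊆ Finset.univ.filter (fun i => p i = q))
    (hPIindep : ∀ q ∈ Finset.univ.image p, AoNIndep γ p (PI q))
    (hPImax : ∀ q ∈ Finset.univ.image p, ∀ B : Finset (Fin n),
      B ⊆ Finset.univ.filter (fun i => p i = q) → AoNIndep γ p B → PI q ⊆ B → PI q = B)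
    (hPImin : ∀ q ∈ Finset.univ.image p, ∀ B : Finset (Fin n),
      B ⊆ Finset.univ.filter (fun i => p i = q) → AoNIndep γ p B →
      (∀ C : Finset (Fin n), C ⊆ Finset.univ.filter (fun i => p i = q) →
        AoNIndep γ p C → B ⊆ C → B = C) →
      ∑ i ∈ PI q, w i ≤ ∑ i ∈ B, w i)
    (Istar : Finset (Fin n)) (hIstar : Istar = (Finset.univ.image p).biUnion PI) :
    -- (a) every feasible chain is dominated by a feasible chain inside I*
    (∀ S : Fin T → Finset (Fin n), Monotone S → (∀ t, ∑ i ∈ S t, w i ≤ W t) →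
      ∃ S' : Fin T → Finset (Fin n),
        Monotone S' ∧ (∀ t, ∑ i ∈ S' t, w i ≤ W t) ∧ (∀ t, S' t ⊆ Istar) ∧
        ∑ t, Δ t * γ (S t) ≤ ∑ t, Δ t * ∑ i ∈ S' t, p i) ∧
    -- (b) inside I*, the submodular profit coincides with the modular profit
    (∀ S : Fin T → Finset (Fin n), Monotone S → (∀ t, ∑ i ∈ S t, w i ≤ W t) →
      (∀ t, S t ⊆ Istar) →
      ∑ t, Δ t * γ (S t) = ∑ t, Δ t * ∑ i ∈ S t, p i) :=
  reduction_to_modularization_general γ p w W Δ hp hγ0 hmono hsub haon PI hPIsub hPIindep hPImax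
    hPImin Istar hIstar
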